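/- Let V and W be full Hilbert modules over locally C*-algebras A and B respectively, E a Hilbert B-module with a non-degenerate continuous *-morphism Ψ : A → L_B(E), and Φ₁ : W → B(H₁,K₁), Φ₂ : W → B(H₂,K₂) two non-degenerate representations of W. If Φ₁ and Φ₂ are unitarily equivalent, then the Rieffel induced representations _E^V Φ₁ and _E^V Φ₂ of V are unitarily equivalent. -/

import Mathlib

noncomputable section
open scoped ComplexOrder RightActions
open ContinuousLinearMap (adjoint)

/-- A (continuous) C*-seminorm on a complex *-algebra: a seminorm which is
submultiplicative and satisfies the C*-identity. -/
structure CStarSeminormOn (A : Type*) [NonUnitalRing A] [StarRing A] [Module ℂ A] extends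
    Seminorm ℂ A where
  mul_le' : ∀ a b : A, toSeminorm (a * b) ≤ toSeminorm a * toSeminorm b
  star_mul_self' : ∀ a : A, toSeminorm (star a * a) = toSeminorm a ^ 2

/-- The data of a (right) Hilbert module over a locally C*-algebra `A`: a right
`A`-module with an `A`-valued inner product which is `A`-linear in the second variable,
hermitian, positive and definite. -/
structure HilbertModuleData (A : Type*) [NonUnitalRing A] [StarRing A] [Module ℂ A]
    [TopologicalSpace A] (E : Type*) [AddCommGroup E] [Module ℂ E] where
  smul : E → A → E
  inner : E → E → A
  add_smul' : ∀ x y a, smul (x + y) a = smul x a + smul y a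
  smul_add' : ∀ x a b, smul x (a + b) = smul x a + smul x b
  smul_mul' : ∀ x a b, smul (smul x a) b = smul x (a * b)
  smul_complex : ∀ (c : ℂ) x a, smul (c • x) a = c • smul x a
  inner_add_right : ∀ x y z, inner x (y + z) = inner x y + inner x z
  inner_smul_right : ∀ x y a, inner x (smul y a) = inner x y * a
  inner_smul_complex : ∀ (c : ℂ) x y, inner x (c • y) = c • inner x y
  star_inner : ∀ x y, star (inner x y) = inner y x
  inner_self_nonneg : ∀ x, inner x x ∈ closure {a : A | ∃ b, a = star b * b}
  inner_self_eq_zero : ∀ x, inner x x = 0 → x = 0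

/-- A C*-algebra bundled with a compatible partial order. -/
structure BundledCStarAlg : Type 1 where
  carrier : Type
  [inst : NonUnitalCStarAlgebra carrier]
  [instOrder : PartialOrder carrier]
  [instSOR : StarOrderedRing carrier]

attribute [instance] BundledCStarAlg.inst BundledCStarAlg.instOrder BundledCStarAlg.instSOR

/-- The December 2024 Mathlib `CStarModule` (right Hilbert C*-module, `A`-linear on the right). -/
class CStarModuleRight (A : outParam <| Type*) (E : Type*) [NonUnitalSemiring A] [StarRing A]
    [Module ℂ A] [AddCommGroup E] [Module ℂ E] [PartialOrder A] [SMul Aᵐᵒᵖ E] [Norm A] [Norm E]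
    extends Inner A E where
  inner_add_right {x} {y} {z} : inner x (y + z) = inner x y + inner x z
  inner_self_nonneg {x} : 0 ≤ inner x x
  inner_self {x} : inner x x = 0 ↔ x = 0
  inner_op_smul_right {a : A} {x y : E} : inner x (y <• a) = inner x y * a
  inner_smul_right_complex {z : ℂ} {x} {y} : inner x (z • y) = z • inner x y
  star_inner x y : star (inner x y) = inner y x
  norm_eq_sqrt_norm_inner_self x : ‖x‖ = √‖inner x x‖

/-- A bundled Hilbert C*-module over a bundled C*-algebra. -/
structure BundledCStarModule (C : BundledCStarAlg) : Type 1 where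
  carrier : Type
  [instGroup : NormedAddCommGroup carrier]
  [instModC : NormedSpace ℂ carrier]
  [instSMul : SMul C.carrierᵐᵒᵖ carrier]
  [instMod : CStarModuleRight C.carrier carrier]
  [instComplete : CompleteSpace carrier]

attribute [instance] BundledCStarModule.instGroup BundledCStarModule.instModC
  BundledCStarModule.instSMul BundledCStarModule.instMod BundledCStarModule.instComplete

/-- `π : A → C` realizes the C*-algebra `C` as the quotient `A_p = A/N_p` of `A` by the
kernel of the C*-seminorm `p`, with the norm induced by `p`. -/
structure IsQuotientHom {A : Type*} [NonUnitalRing A] [StarRing A] [Module ℂ A]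
    (p : A → ℝ) (C : BundledCStarAlg) (π : A → C.carrier) : Prop where
  surj : Function.Surjective π
  map_add : ∀ a b, π (a + b) = π a + π b
  map_mul : ∀ a b, π (a * b) = π a * π b
  map_smul : ∀ (c : ℂ) (a : A), π (c • a) = c • π a
  map_star : ∀ a, π (star a) = star (π a)
  norm_eq : ∀ a, ‖π a‖ = p a

/-- `σ : E → F` realizes the Hilbert C*-module `F` over `C` as the quotient
`E_p = E/N_p^E` of the Hilbert module `E`, compatibly with the quotient map `π : A → C`. -/
structure IsQuotientModuleMap {A : Type*} [NonUnitalRing A] [StarRing A] [Module ℂ A]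
    [TopologicalSpace A] {E : Type*} [AddCommGroup E] [Module ℂ E]
    (M : HilbertModuleData A E) {C : BundledCStarAlg} (π : A → C.carrier)
    (F : BundledCStarModule C) (σ : E → F.carrier) : Prop where
  surj : Function.Surjective σ
  map_add : ∀ x y, σ (x + y) = σ x + σ y
  map_smulC : ∀ (c : ℂ) x, σ (c • x) = c • σ x
  map_smul : ∀ x a, σ (M.smul x a) = σ x <• (π a)
  map_inner : ∀ x y, (inner C.carrier (σ x) (σ y) : C.carrier) = π (M.inner x y)

private lemma aux_extend_map {X₁ X₂ : Type*} [NormedAddCommGroup X₁] [InnerProductSpace ℂ X₁]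
    [CompleteSpace X₁] [NormedAddCommGroup X₂] [InnerProductSpace ℂ X₂] [CompleteSpace X₂]
    {ι : Type*} (e₁ : ι → X₁) (e₂ : ι → X₂)
    (hd₁ : Dense ((Submodule.span ℂ (Set.range e₁) : Submodule ℂ X₁) : Set X₁))
    (hinner : ∀ i j, (inner ℂ (e₁ i) (e₁ j) : ℂ) = inner ℂ (e₂ i) (e₂ j)) :
    ∃ T : X₁ →L[ℂ] X₂, (∀ i, T (e₁ i) = e₂ i) ∧ ∀ x, ‖T x‖ = ‖x‖ := by
  set L₀ := Finsupp.linearCombination ℂ e₁ with hL₀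
  set L₁ := Finsupp.linearCombination ℂ e₂ with hL₁
  have hIP : ∀ p q : ι →₀ ℂ, (inner ℂ (L₀ p) (L₀ q) : ℂ) = inner ℂ (L₁ p) (L₁ q) := by
    intro p q
    induction p using Finsupp.induction_linear with
    | zero => simp
    | add f g hf hg => simp only [map_add, inner_add_left, hf, hg]
    | single i c =>
      induction q using Finsupp.induction_linear with
      | zero => simp
      | add f g hf hg => simp only [map_add, inner_add_right, hf, hg]
      | single j d =>
        simp only [hL₀, hL₁, Finsupp.linearCombination_single, inner_smul_left,
          inner_smul_right, hinner i j]
  have hnorm : ∀ p, ‖L₁ p‖ = ‖L₀ p‖ := by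
    intro p
    rw [@norm_eq_sqrt_re_inner ℂ, @norm_eq_sqrt_re_inner ℂ, hIP p p]
  have hcongr : ∀ p q : ι →₀ ℂ, L₀ p = L₀ q → L₁ p = L₁ q := by
    intro p q h
    have h0 : ‖L₁ (p - q)‖ = 0 := by rw [hnorm, map_sub, h, sub_self, norm_zero]
    have := norm_eq_zero.mp h0
    rw [map_sub, sub_eq_zero] at this
    exact this
  set D := Submodule.span ℂ (Set.range e₁) with hD
  have hrange : LinearMap.range L₀ = D := Finsupp.range_linearCombination ℂ
  have hsurj : ∀ d : D, ∃ p : ι →₀ ℂ, L₀ p = (d : X₁) := by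
    intro d
    have : (d : X₁) ∈ LinearMap.range L₀ := by rw [hrange]; exact d.2
    exact this
  choose sec hsec using hsurj
  have gadd : ∀ d d' : D, L₁ (sec (d + d')) = L₁ (sec d) + L₁ (sec d') := by
    intro d d'
    rw [← map_add]
    exact hcongr _ _ (by rw [hsec, map_add, hsec, hsec, Submodule.coe_add])
  have gsmul : ∀ (c : ℂ) (d : D), L₁ (sec (c • d)) = c • L₁ (sec d) := by
    intro c d
    rw [← map_smul]
    exact hcongr _ _ (by rw [hsec, map_smul, hsec, Submodule.coe_smul])
  let glin : D →ₗ[ℂ] X₂ :=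
    { toFun := fun d => L₁ (sec d)
      map_add' := gadd
      map_smul' := gsmul }
  have gnorm : ∀ d : D, ‖glin d‖ = ‖d‖ := by
    intro d
    show ‖L₁ (sec d)‖ = ‖d‖
    rw [hnorm, hsec]
    rfl
  let giso : D →ₗᵢ[ℂ] X₂ := ⟨glin, gnorm⟩
  have hdr : DenseRange ⇑(D.subtypeL) := by
    have : Set.range ⇑(D.subtypeL) = (D : Set X₁) := Subtype.range_coe
    rw [DenseRange, this]; exact hd₁
  have hui : IsUniformInducing ⇑(D.subtypeL) := isometry_subtype_coe.isUniformInducing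
  set T := giso.toContinuousLinearMap.extend D.subtypeL with hT
  have hTd : ∀ d : D, T (d : X₁) = giso d := fun d =>
    ContinuousLinearMap.extend_eq _ hdr hui d
  have hTnorm : ∀ x, ‖T x‖ = ‖x‖ := by
    have hsub : (D : Set X₁) ⊆ {y : X₁ | ‖T y‖ = ‖y‖} := by
      rintro y hy
      have := hTd ⟨y, hy⟩
      simp only [Set.mem_setOf_eq, this]
      rw [giso.norm_map]; rfl
    have hcl : IsClosed {y : X₁ | ‖T y‖ = ‖y‖} :=
      isClosed_eq (T.continuous.norm) continuous_norm
    intro x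
    exact closure_minimal hsub hcl (hd₁ x)
  refine ⟨T, fun i => ?_, hTnorm⟩
  have hmem : e₁ i ∈ D := Submodule.subset_span ⟨i, rfl⟩
  have := hTd ⟨e₁ i, hmem⟩
  rw [show ((⟨e₁ i, hmem⟩ : D) : X₁) = e₁ i from rfl] at this
  rw [this]
  show L₁ (sec ⟨e₁ i, hmem⟩) = e₂ i
  have h1 : L₁ (Finsupp.single i (1 : ℂ)) = e₂ i := by
    rw [hL₁, Finsupp.linearCombination_single, one_smul]
  rw [← h1]
  exact hcongr _ _ (by rw [hsec, hL₀, Finsupp.linearCombination_single, one_smul])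

private lemma aux_extend {X₁ X₂ : Type*} [NormedAddCommGroup X₁] [InnerProductSpace ℂ X₁]
    [CompleteSpace X₁] [NormedAddCommGroup X₂] [InnerProductSpace ℂ X₂] [CompleteSpace X₂]
    {ι : Type*} (e₁ : ι → X₁) (e₂ : ι → X₂)
    (hd₁ : Dense ((Submodule.span ℂ (Set.range e₁) : Submodule ℂ X₁) : Set X₁))
    (hd₂ : Dense ((Submodule.span ℂ (Set.range e₂) : Submodule ℂ X₂) : Set X₂))
    (hinner : ∀ i j, (inner ℂ (e₁ i) (e₁ j) : ℂ) = inner ℂ (e₂ i) (e₂ j)) :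
    ∃ Θ : X₁ ≃ₗᵢ[ℂ] X₂, ∀ i, Θ (e₁ i) = e₂ i := by
  obtain ⟨T, hTe, hTn⟩ := aux_extend_map e₁ e₂ hd₁ hinner
  obtain ⟨S, hSe, hSn⟩ := aux_extend_map e₂ e₁ hd₂ (fun i j => (hinner i j).symm)
  have hST : S ∘L T = ContinuousLinearMap.id ℂ X₁ := by
    apply ContinuousLinearMap.ext_on hd₁
    rintro _ ⟨i, rfl⟩
    simp only [ContinuousLinearMap.comp_apply, ContinuousLinearMap.id_apply, hTe, hSe]
  have hTS : T ∘L S = ContinuousLinearMap.id ℂ X₂ := by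
    apply ContinuousLinearMap.ext_on hd₂
    rintro _ ⟨i, rfl⟩
    simp only [ContinuousLinearMap.comp_apply, ContinuousLinearMap.id_apply, hTe, hSe]
  let eqv : X₁ ≃ₗ[ℂ] X₂ := LinearEquiv.ofLinear T.toLinearMap S.toLinearMap
    (LinearMap.ext fun x => DFunLike.congr_fun hTS x)
    (LinearMap.ext fun x => DFunLike.congr_fun hST x)
  refine ⟨⟨eqv, fun x => hTn x⟩, fun i => hTe i⟩


/-- If two non-degenerate representations `Φ₁, Φ₂` of `W` are unitarily equivalent, then
the Rieffel induced representations `_E^V Φ₁` and `_E^V Φ₂` of `V` are unitarily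
equivalent. -/
theorem stmt_13
    -- `A` and `B` are locally C*-algebras:
    {A : Type*} [NonUnitalRing A] [StarRing A] [Module ℂ A]
    [UniformSpace A] [IsUniformAddGroup A] [T2Space A] [CompleteSpace A]
    {ιA : Type*} [Nonempty ιA] (SA : ιA → CStarSeminormOn A)
    (hA : WithSeminorms fun i => (SA i).toSeminorm)
    {B : Type*} [NonUnitalRing B] [StarRing B] [Module ℂ B]
    [UniformSpace B] [IsUniformAddGroup B] [T2Space B] [CompleteSpace B]
    {ιB : Type*} [Nonempty ιB] (SB : ιB → CStarSeminormOn B)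
    (hB : WithSeminorms fun i => (SB i).toSeminorm)
    -- `V` is a full Hilbert `A`-module and `W` is a full Hilbert `B`-module:
    {V : Type*} [AddCommGroup V] [Module ℂ V] (MV : HilbertModuleData A V)
    (hVfull : Dense ((Submodule.span ℂ
      (Set.range fun q : V × V => MV.inner q.1 q.2) : Submodule ℂ A) : Set A))
    {W : Type*} [AddCommGroup W] [Module ℂ W] (MW : HilbertModuleData B W)
    (hWfull : Dense ((Submodule.span ℂ
      (Set.range fun q : W × W => MW.inner q.1 q.2) : Submodule ℂ B) : Set B))
    -- `E` is a Hilbert `B`-module and `Ψ : A → L_B(E)` is a *-morphism: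
    {E : Type*} [AddCommGroup E] [Module ℂ E] [TopologicalSpace E]
    (ME : HilbertModuleData B E)
    (Ψ : A → E → E)
    (hΨ_addA : ∀ a a' x, Ψ (a + a') x = Ψ a x + Ψ a' x)
    (hΨ_addE : ∀ a x y, Ψ a (x + y) = Ψ a x + Ψ a y)
    (hΨ_smul : ∀ (c : ℂ) a x, Ψ (c • a) x = c • Ψ a x)
    (hΨ_mul : ∀ a a' x, Ψ (a * a') x = Ψ a (Ψ a' x))
    (hΨ_adj : ∀ a x y, ME.inner (Ψ a x) y = ME.inner x (Ψ (star a) y))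
    (hΨ_mod : ∀ a x b, Ψ a (ME.smul x b) = ME.smul (Ψ a x) b)
    -- `Ψ` is non-degenerate:
    (hΨ_nondeg : Dense ((Submodule.span ℂ
      (Set.range fun q : A × E => Ψ q.1 q.2) : Submodule ℂ E) : Set E))
    -- two non-degenerate representations `Φ₁, Φ₂` of `W`:
    {H₁ K₁ H₂ K₂ : Type*}
    [NormedAddCommGroup H₁] [InnerProductSpace ℂ H₁] [CompleteSpace H₁]
    [NormedAddCommGroup K₁] [InnerProductSpace ℂ K₁] [CompleteSpace K₁]
    [NormedAddCommGroup H₂] [InnerProductSpace ℂ H₂] [CompleteSpace H₂]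
    [NormedAddCommGroup K₂] [InnerProductSpace ℂ K₂] [CompleteSpace K₂]
    (φ₁ : B → (H₁ →L[ℂ] H₁)) (φ₂ : B → (H₂ →L[ℂ] H₂))
    (hφ₁_add : ∀ b b', φ₁ (b + b') = φ₁ b + φ₁ b')
    (hφ₁_mul : ∀ b b', φ₁ (b * b') = φ₁ b ∘L φ₁ b')
    (hφ₁_smul : ∀ (c : ℂ) b, φ₁ (c • b) = c • φ₁ b)
    (hφ₁_star : ∀ b, φ₁ (star b) = adjoint (φ₁ b))
    (hφ₂_add : ∀ b b', φ₂ (b + b') = φ₂ b + φ₂ b')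
    (hφ₂_mul : ∀ b b', φ₂ (b * b') = φ₂ b ∘L φ₂ b')
    (hφ₂_smul : ∀ (c : ℂ) b, φ₂ (c • b) = c • φ₂ b)
    (hφ₂_star : ∀ b, φ₂ (star b) = adjoint (φ₂ b))
    (Φ₁ : W → (H₁ →L[ℂ] K₁)) (Φ₂ : W → (H₂ →L[ℂ] K₂))
    (hΦ₁ : ∀ x y : W, adjoint (Φ₁ x) ∘L Φ₁ y = φ₁ (MW.inner x y))
    (hΦ₂ : ∀ x y : W, adjoint (Φ₂ x) ∘L Φ₂ y = φ₂ (MW.inner x y))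
    (hΦ₁nd : Dense ((Submodule.span ℂ
      (Set.range fun s : W × H₁ => Φ₁ s.1 s.2) : Submodule ℂ K₁) : Set K₁))
    (hΦ₁nd' : Dense ((Submodule.span ℂ
      (Set.range fun s : W × K₁ => adjoint (Φ₁ s.1) s.2) : Submodule ℂ H₁) : Set H₁))
    (hΦ₂nd : Dense ((Submodule.span ℂ
      (Set.range fun s : W × H₂ => Φ₂ s.1 s.2) : Submodule ℂ K₂) : Set K₂))
    (hΦ₂nd' : Dense ((Submodule.span ℂ
      (Set.range fun s : W × K₂ => adjoint (Φ₂ s.1) s.2) : Submodule ℂ H₂) : Set H₂))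
    -- the induced Hilbert spaces for `Φ₁`:
    {EH₁ : Type*} [NormedAddCommGroup EH₁] [InnerProductSpace ℂ EH₁] [CompleteSpace EH₁]
    (em₁ : E → H₁ → EH₁)
    (hem₁_inner : ∀ (x y : E) (h k : H₁),
      (inner ℂ (em₁ x h) (em₁ y k) : ℂ) = (inner ℂ h (φ₁ (ME.inner x y) k) : ℂ))
    (hem₁_dense : Dense ((Submodule.span ℂ
      (Set.range fun s : E × H₁ => em₁ s.1 s.2) : Submodule ℂ EH₁) : Set EH₁))
    {VEH₁ : Type*} [NormedAddCommGroup VEH₁] [InnerProductSpace ℂ VEH₁] [CompleteSpace VEH₁]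
    (em2₁ : V → E → H₁ → VEH₁)
    (hem2₁_inner : ∀ (v v' : V) (x x' : E) (h k : H₁),
      (inner ℂ (em2₁ v x h) (em2₁ v' x' k) : ℂ) =
        (inner ℂ h (φ₁ (ME.inner x (Ψ (MV.inner v v') x')) k) : ℂ))
    (hem2₁_dense : Dense ((Submodule.span ℂ
      (Set.range fun s : V × E × H₁ => em2₁ s.1 s.2.1 s.2.2) : Submodule ℂ VEH₁) :
        Set VEH₁))
    -- the induced Hilbert spaces for `Φ₂`:
    {EH₂ : Type*} [NormedAddCommGroup EH₂] [InnerProductSpace ℂ EH₂] [CompleteSpace EH₂]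
    (em₂ : E → H₂ → EH₂)
    (hem₂_inner : ∀ (x y : E) (h k : H₂),
      (inner ℂ (em₂ x h) (em₂ y k) : ℂ) = (inner ℂ h (φ₂ (ME.inner x y) k) : ℂ))
    (hem₂_dense : Dense ((Submodule.span ℂ
      (Set.range fun s : E × H₂ => em₂ s.1 s.2) : Submodule ℂ EH₂) : Set EH₂))
    {VEH₂ : Type*} [NormedAddCommGroup VEH₂] [InnerProductSpace ℂ VEH₂] [CompleteSpace VEH₂]
    (em2₂ : V → E → H₂ → VEH₂)
    (hem2₂_inner : ∀ (v v' : V) (x x' : E) (h k : H₂),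
      (inner ℂ (em2₂ v x h) (em2₂ v' x' k) : ℂ) =
        (inner ℂ h (φ₂ (ME.inner x (Ψ (MV.inner v v') x')) k) : ℂ))
    (hem2₂_dense : Dense ((Submodule.span ℂ
      (Set.range fun s : V × E × H₂ => em2₂ s.1 s.2.1 s.2.2) : Submodule ℂ VEH₂) :
        Set VEH₂))
    -- the Rieffel induced representations:
    (η₁ : V → (EH₁ →L[ℂ] VEH₁))
    (hη₁ : ∀ (v : V) (x : E) (h : H₁), η₁ v (em₁ x h) = em2₁ v x h)
    (η₂ : V → (EH₂ →L[ℂ] VEH₂))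
    (hη₂ : ∀ (v : V) (x : E) (h : H₂), η₂ v (em₂ x h) = em2₂ v x h)
    -- `Φ₁` and `Φ₂` are unitarily equivalent:
    (U₁ : H₁ ≃ₗᵢ[ℂ] H₂) (U₂ : K₁ ≃ₗᵢ[ℂ] K₂)
    (hU : ∀ (w : W) (h : H₁), U₂ (Φ₁ w h) = Φ₂ w (U₁ h)) :
    ∃ (W₁ : EH₁ ≃ₗᵢ[ℂ] EH₂) (W₂ : VEH₁ ≃ₗᵢ[ℂ] VEH₂),
      ∀ (v : V) (ξ : EH₁), W₂ (η₁ v ξ) = η₂ v (W₁ ξ) := by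
  -- `U₁` intertwines the adjoints of `Φ₁` and `Φ₂`:
  have hadj : ∀ (w : W) (κ : K₁), U₁ (adjoint (Φ₁ w) κ) = adjoint (Φ₂ w) (U₂ κ) := by
    intro w κ
    apply ext_inner_right ℂ
    intro z
    have h1 : Φ₁ w (U₁.symm z) = U₂.symm (Φ₂ w z) := by
      apply U₂.injective
      rw [hU, U₁.apply_symm_apply, U₂.apply_symm_apply]
    calc (inner ℂ (U₁ (adjoint (Φ₁ w) κ)) z : ℂ)
        = inner ℂ (U₁ (adjoint (Φ₁ w) κ)) (U₁ (U₁.symm z)) := by rw [U₁.apply_symm_apply]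
      _ = inner ℂ (adjoint (Φ₁ w) κ) (U₁.symm z) := U₁.inner_map_map _ _
      _ = inner ℂ κ (Φ₁ w (U₁.symm z)) := ContinuousLinearMap.adjoint_inner_left _ _ _
      _ = inner ℂ κ (U₂.symm (Φ₂ w z)) := by rw [h1]
      _ = inner ℂ (U₂ κ) (U₂ (U₂.symm (Φ₂ w z))) := (U₂.inner_map_map _ _).symm
      _ = inner ℂ (U₂ κ) (Φ₂ w z) := by rw [U₂.apply_symm_apply]
      _ = inner ℂ (adjoint (Φ₂ w) (U₂ κ)) z := (ContinuousLinearMap.adjoint_inner_left _ _ _).symm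
  -- `φᵢ b` composed with an adjoint of `Φᵢ` is again an adjoint:
  have hco₁ : ∀ (b : B) (w : W) (κ : K₁),
      φ₁ b (adjoint (Φ₁ w) κ) = adjoint (Φ₁ (MW.smul w (star b))) κ := by
    intro b w
    have : φ₁ b ∘L adjoint (Φ₁ w) = adjoint (Φ₁ (MW.smul w (star b))) := by
      apply ContinuousLinearMap.ext_on hΦ₁nd
      rintro _ ⟨⟨w', h⟩, rfl⟩
      simp only [ContinuousLinearMap.comp_apply]
      rw [← ContinuousLinearMap.comp_apply (adjoint (Φ₁ w)), hΦ₁,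
        ← ContinuousLinearMap.comp_apply (adjoint (Φ₁ (MW.smul w (star b)))), hΦ₁,
        ← ContinuousLinearMap.comp_apply (φ₁ b), ← hφ₁_mul]
      congr 2
      conv_rhs => rw [← MW.star_inner, MW.inner_smul_right, star_mul, star_star, MW.star_inner]
    intro κ
    exact DFunLike.congr_fun this κ
  have hco₂ : ∀ (b : B) (w : W) (κ : K₂),
      φ₂ b (adjoint (Φ₂ w) κ) = adjoint (Φ₂ (MW.smul w (star b))) κ := by
    intro b w
    have : φ₂ b ∘L adjoint (Φ₂ w) = adjoint (Φ₂ (MW.smul w (star b))) := by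
      apply ContinuousLinearMap.ext_on hΦ₂nd
      rintro _ ⟨⟨w', h⟩, rfl⟩
      simp only [ContinuousLinearMap.comp_apply]
      rw [← ContinuousLinearMap.comp_apply (adjoint (Φ₂ w)), hΦ₂,
        ← ContinuousLinearMap.comp_apply (adjoint (Φ₂ (MW.smul w (star b)))), hΦ₂,
        ← ContinuousLinearMap.comp_apply (φ₂ b), ← hφ₂_mul]
      congr 2
      conv_rhs => rw [← MW.star_inner, MW.inner_smul_right, star_mul, star_star, MW.star_inner]
    intro κ
    exact DFunLike.congr_fun this κ
  -- key: `U₁` intertwines `φ₁` and `φ₂`: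
  have hkey : ∀ (b : B) (h : H₁), U₁ (φ₁ b h) = φ₂ b (U₁ h) := by
    intro b
    have hcl : (U₁.toLinearIsometry.toContinuousLinearMap ∘L φ₁ b) =
        (φ₂ b ∘L U₁.toLinearIsometry.toContinuousLinearMap) := by
      apply ContinuousLinearMap.ext_on hΦ₁nd'
      rintro _ ⟨⟨w, κ⟩, rfl⟩
      show U₁ (φ₁ b (adjoint (Φ₁ w) κ)) = φ₂ b (U₁ (adjoint (Φ₁ w) κ))
      rw [hco₁, hadj, hadj, hco₂]
    intro h
    exact DFunLike.congr_fun hcl h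
  have hkey' : ∀ (b : B) (h k : H₁),
      (inner ℂ (U₁ h) (φ₂ b (U₁ k)) : ℂ) = inner ℂ h (φ₁ b k) := by
    intro b h k
    rw [← hkey, U₁.inner_map_map]
  -- construct `W₁`:
  obtain ⟨W₁, hW₁⟩ := aux_extend (fun s : E × H₁ => em₁ s.1 s.2)
    (fun s : E × H₁ => em₂ s.1 (U₁ s.2)) hem₁_dense
    (by
      have hr : (Set.range fun s : E × H₁ => em₂ s.1 (U₁ s.2)) =
          Set.range fun s : E × H₂ => em₂ s.1 s.2 := by
        ext z
        constructor
        · rintro ⟨⟨x, h⟩, rfl⟩; exact ⟨(x, U₁ h), rfl⟩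
        · rintro ⟨⟨x, h⟩, rfl⟩; exact ⟨(x, U₁.symm h), by simp⟩
      rw [hr]; exact hem₂_dense)
    (by
      rintro ⟨x, h⟩ ⟨y, k⟩
      show (inner ℂ (em₁ x h) (em₁ y k) : ℂ) = inner ℂ (em₂ x (U₁ h)) (em₂ y (U₁ k))
      rw [hem₁_inner, hem₂_inner, hkey'])
  -- construct `W₂`:
  obtain ⟨W₂, hW₂⟩ := aux_extend (fun s : V × E × H₁ => em2₁ s.1 s.2.1 s.2.2)
    (fun s : V × E × H₁ => em2₂ s.1 s.2.1 (U₁ s.2.2)) hem2₁_dense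
    (by
      have hr : (Set.range fun s : V × E × H₁ => em2₂ s.1 s.2.1 (U₁ s.2.2)) =
          Set.range fun s : V × E × H₂ => em2₂ s.1 s.2.1 s.2.2 := by
        ext z
        constructor
        · rintro ⟨⟨v, x, h⟩, rfl⟩; exact ⟨(v, x, U₁ h), rfl⟩
        · rintro ⟨⟨v, x, h⟩, rfl⟩; exact ⟨(v, x, U₁.symm h), by simp⟩
      rw [hr]; exact hem2₂_dense)
    (by
      rintro ⟨v, x, h⟩ ⟨v', x', k⟩
      show (inner ℂ (em2₁ v x h) (em2₁ v' x' k) : ℂ) =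
        inner ℂ (em2₂ v x (U₁ h)) (em2₂ v' x' (U₁ k))
      rw [hem2₁_inner, hem2₂_inner, hkey'])
  refine ⟨W₁, W₂, fun v ξ => ?_⟩
  have hcl : (W₂.toLinearIsometry.toContinuousLinearMap ∘L η₁ v) =
      (η₂ v ∘L W₁.toLinearIsometry.toContinuousLinearMap) := by
    apply ContinuousLinearMap.ext_on hem₁_dense
    rintro _ ⟨⟨x, h⟩, rfl⟩
    show W₂ (η₁ v (em₁ x h)) = η₂ v (W₁ (em₁ x h))
    rw [hη₁]
    have h1 := hW₂ (v, x, h)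
    have h2 := hW₁ (x, h)
    rw [h1, h2, hη₂]
  exact DFunLike.congr_fun hcl ξ
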